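/- arXiv:1606.06699 — 3 statements merged into one kernel-verified Lean document; each statement's English description precedes it below -/
import Mathlib

section
/- Let ℓ: ℝ → τμℤ be the quantization ℓ(x) = cτμ with cτμ − τμ/2 < x ≤ cτμ + τμ/2. If δ_min and δ_max are integer multiples of τμ and I = [x_lo, x_hi] ⊆ ℝ is a nonempty interval, then ℓ applied pointwise to the predicted set I^p = [x_lo + u + δ_min, x_hi + u + δ_max] (with u ∈ τμℤ) equals the set obtained by applying the discrete prediction to ℓ(I): ℓ(I^p) = { q + u + w : q ∈ ℓ(I), w ∈ τμℤ, δ_min ≤ w ≤ δ_max }. -/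
/-- Quantization commutes with prediction: if the disturbance bounds and input are
grid multiples, then `ℓ(I^p) = { q + u + w : q ∈ ℓ(I), w grid multiple in [δmin, δmax] }`. -/
theorem quantization_commutes_with_prediction
    (τ μ : ℝ) (hτ : 0 < τ) (hμ : 0 < μ)
    (ℓ : ℝ → ℝ)
    (hℓ : ∀ x : ℝ, ∃ c : ℤ, ℓ x = c * (τ * μ) ∧
        c * (τ * μ) - τ * μ / 2 < x ∧ x ≤ c * (τ * μ) + τ * μ / 2)
    (u δmin δmax : ℝ) (cu cmin cmax : ℤ)
    (hu : u = cu * (τ * μ)) (hδmin : δmin = cmin * (τ * μ)) (hδmax : δmax = cmax * (τ * μ))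
    (hδ : δmin ≤ δmax)
    (xlo xhi : ℝ) (hI : xlo ≤ xhi) :
    ℓ '' Set.Icc (xlo + u + δmin) (xhi + u + δmax) =
      { y | ∃ q ∈ ℓ '' Set.Icc xlo xhi, ∃ w : ℝ,
          (∃ cw : ℤ, w = cw * (τ * μ)) ∧ δmin ≤ w ∧ w ≤ δmax ∧ y = q + u + w } := by
  set ε : ℝ := τ * μ with hεdef
  have hε : 0 < ε := mul_pos hτ hμ
  -- uniqueness of quantizer index
  have uniq : ∀ (c d : ℤ) (x : ℝ), c * ε - ε / 2 < x → x ≤ c * ε + ε / 2 →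
      d * ε - ε / 2 < x → x ≤ d * ε + ε / 2 → c = d := by
    intro c d x h1 h2 h3 h4
    have hcd : (c : ℝ) < d + 1 := by
      have : (c : ℝ) * ε < ((d : ℝ) + 1) * ε := by nlinarith
      exact lt_of_mul_lt_mul_right this hε.le
    have hdc : (d : ℝ) < c + 1 := by
      have : (d : ℝ) * ε < ((c : ℝ) + 1) * ε := by nlinarith
      exact lt_of_mul_lt_mul_right this hε.le
    have h1' : c < d + 1 := by exact_mod_cast hcd
    have h2' : d < c + 1 := by exact_mod_cast hdc
    omega
  -- shift property
  have shift : ∀ (x : ℝ) (k : ℤ), ℓ (x + k * ε) = ℓ x + k * ε := by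
    intro x k
    obtain ⟨c, hc1, hc2, hc3⟩ := hℓ x
    obtain ⟨d, hd1, hd2, hd3⟩ := hℓ (x + k * ε)
    have hdk : (d - k : ℤ) = c := by
      refine uniq (d - k) c x ?_ ?_ hc2 hc3 <;> push_cast <;> nlinarith
    have : (d : ℝ) = c + k := by
      have := hdk; push_cast [← this]; ring
    rw [hd1, hc1, this]; ring
  -- monotonicity
  have mono : ∀ x y : ℝ, x ≤ y → ℓ x ≤ ℓ y := by
    intro x y hxy
    obtain ⟨c, hc1, hc2, hc3⟩ := hℓ x
    obtain ⟨d, hd1, hd2, hd3⟩ := hℓ y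
    have : (c : ℝ) * ε < ((d : ℝ) + 1) * ε := by nlinarith
    have hcd : (c : ℝ) < d + 1 := lt_of_mul_lt_mul_right this hε.le
    have hcd' : c ≤ d := by exact_mod_cast Int.lt_add_one_iff.mp (by exact_mod_cast hcd)
    rw [hc1, hd1]
    have : (c : ℝ) ≤ d := by exact_mod_cast hcd'
    nlinarith
  -- ℓ fixes grid points
  have fix : ∀ c : ℤ, ℓ (c * ε) = c * ε := by
    intro c
    obtain ⟨d, hd1, hd2, hd3⟩ := hℓ (c * ε)
    have : d = c := uniq d c (c * ε) hd2 hd3 (by nlinarith) (by nlinarith)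
    rw [hd1, this]
  -- image of an interval
  have image : ∀ a b : ℝ, a ≤ b →
      ℓ '' Set.Icc a b = { y | (∃ c : ℤ, y = c * ε) ∧ ℓ a ≤ y ∧ y ≤ ℓ b } := by
    intro a b hab
    ext y
    constructor
    · rintro ⟨x, ⟨hx1, hx2⟩, rfl⟩
      obtain ⟨c, hc1, -, -⟩ := hℓ x
      exact ⟨⟨c, hc1⟩, mono a x hx1, mono x b hx2⟩
    · rintro ⟨⟨c, rfl⟩, h1, h2⟩
      obtain ⟨ca, ha1, ha2, ha3⟩ := hℓ a
      obtain ⟨cb, hb1, hb2, hb3⟩ := hℓ b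
      by_cases hA : (c : ℝ) * ε = ℓ a
      · exact ⟨a, ⟨le_refl a, hab⟩, hA.symm⟩
      by_cases hB : (c : ℝ) * ε = ℓ b
      · exact ⟨b, ⟨hab, le_refl b⟩, hB.symm⟩
      · refine ⟨c * ε, ⟨?_, ?_⟩, fix c⟩
        · have h1' : ℓ a < c * ε := lt_of_le_of_ne h1 (Ne.symm hA)
          rw [ha1] at h1'
          have : (ca : ℝ) < c := lt_of_mul_lt_mul_right h1' hε.le
          have hca : ca + 1 ≤ c := by exact_mod_cast Int.add_one_le_iff.mpr (by exact_mod_cast this)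
          have : (ca : ℝ) + 1 ≤ c := by exact_mod_cast hca
          nlinarith
        · have h2' : (c : ℝ) * ε < ℓ b := lt_of_le_of_ne h2 hB
          rw [hb1] at h2'
          have : (c : ℝ) < cb := lt_of_mul_lt_mul_right h2' hε.le
          have hcb : c + 1 ≤ cb := by exact_mod_cast Int.add_one_le_iff.mpr (by exact_mod_cast this)
          have : (c : ℝ) + 1 ≤ cb := by exact_mod_cast hcb
          nlinarith
  -- main proof
  obtain ⟨cA, hA1, -, -⟩ := hℓ xlo
  obtain ⟨cB, hB1, -, -⟩ := hℓ xhi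
  have hAB : ℓ xlo ≤ ℓ xhi := mono _ _ hI
  have shiftlo : ℓ (xlo + u + δmin) = ℓ xlo + u + δmin := by
    have := shift xlo (cu + cmin)
    rw [hu, hδmin]
    push_cast at this
    rw [show xlo + cu * ε + cmin * ε = xlo + (cu + cmin : ℝ) * ε by ring, this]; ring
  have shifthi : ℓ (xhi + u + δmax) = ℓ xhi + u + δmax := by
    have := shift xhi (cu + cmax)
    rw [hu, hδmax]
    push_cast at this
    rw [show xhi + cu * ε + cmax * ε = xhi + (cu + cmax : ℝ) * ε by ring, this]; ring
  ext y
  constructor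
  · -- forward
    rintro ⟨x, ⟨hx1, hx2⟩, rfl⟩
    obtain ⟨c, hc1, -, -⟩ := hℓ x
    have hlo : ℓ xlo + u + δmin ≤ c * ε := by
      rw [← hc1, ← shiftlo]; exact mono _ _ hx1
    have hhi : (c : ℝ) * ε ≤ ℓ xhi + u + δmax := by
      rw [← hc1, ← shifthi]; exact mono _ _ hx2
    set q : ℝ := min (ℓ xhi) (c * ε - u - δmin) with hq
    have hqgrid : ∃ cq : ℤ, q = cq * ε := by
      rcases min_cases (ℓ xhi) (c * ε - u - δmin) with ⟨h, -⟩ | ⟨h, -⟩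
      · exact ⟨cB, by rw [hq, h, hB1]⟩
      · refine ⟨c - cu - cmin, ?_⟩
        rw [hq, h, hu, hδmin]; push_cast; ring
    have hqA : ℓ xlo ≤ q := le_min hAB (by linarith)
    have hqB : q ≤ ℓ xhi := min_le_left _ _
    have hqmem : q ∈ ℓ '' Set.Icc xlo xhi := by
      rw [image xlo xhi hI]
      obtain ⟨cq, hcq⟩ := hqgrid
      exact ⟨⟨cq, hcq⟩, hqA, hqB⟩
    refine ⟨q, hqmem, c * ε - u - q, ?_, ?_, ?_, ?_⟩
    · obtain ⟨cq, hcq⟩ := hqgrid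
      refine ⟨c - cu - cq, ?_⟩
      rw [hcq, hu]; push_cast; ring
    · have : q ≤ c * ε - u - δmin := min_le_right _ _
      linarith
    · have : c * ε - u - δmax ≤ q := le_min (by linarith) (by linarith)
      linarith
    · rw [hc1]; ring
  · -- backward
    rintro ⟨q, ⟨x0, ⟨hx1, hx2⟩, rfl⟩, w, ⟨cw, hw⟩, hw1, hw2, rfl⟩
    refine ⟨x0 + u + w, ⟨by linarith, by linarith⟩, ?_⟩
    have := shift x0 (cu + cw)
    push_cast at this
    rw [show x0 + u + w = x0 + (↑cu + ↑cw) * ε by rw [hu, hw]; ring, this, hu, hw]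
    ring
end

section
/- Quantization commutes with intersection for intervals on the grid: if δ_min, δ_max, u are integer multiples of τμ and I^p and Î are closed intervals whose endpoints lie in τμℤ shifted consistently with the quantization cells (specifically, intervals of the form [aτμ + r, bτμ + r] with fixed offset r satisfying |r| ≤ τμ/2), and I^p ∩ Î ≠ ∅, then ℓ(I^p ∩ Î) = ℓ(I^p) ∩ ℓ(Î). -/
/-!
The quantizer `ℓ` rounds `x` to `⌈x / τμ - 1/2⌉ τμ`, so it is monotone and each of its
fibres is an interval. If `ℓ x₁ = ℓ x₂` with `x₁ ∈ I^p` and `x₂ ∈ Î`, then the fibre through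
`x₁`, `I^p` and `Î` are pairwise intersecting intervals, so by Helly's theorem on the line
they have a common point `x ∈ I^p ∩ Î`, and `ℓ x = ℓ x₁`.
-/

open Set

section HellyOnLine

variable {α : Type*} [LinearOrder α]

lemma mem_uIcc_or_mem_uIcc_or_mem_uIcc (p q r : α) :
    q ∈ uIcc p r ∨ p ∈ uIcc q r ∨ r ∈ uIcc p q := by
  simp only [mem_uIcc]
  rcases le_total p q with hpq | hqp <;> rcases le_total q r with hqr | hrq <;>
    rcases le_total p r with hpr | hrp <;> simp_all

/-- Helly's theorem for three order-connected sets in a linear order. -/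
theorem Set.OrdConnected.inter_inter_nonempty {s t u : Set α} (hs : s.OrdConnected)
    (ht : t.OrdConnected) (hu : u.OrdConnected) (hst : (s ∩ t).Nonempty)
    (htu : (t ∩ u).Nonempty) (hsu : (s ∩ u).Nonempty) : (s ∩ t ∩ u).Nonempty := by
  obtain ⟨p, hps, hpt⟩ := hst
  obtain ⟨q, hqt, hqu⟩ := htu
  obtain ⟨r, hrs, hru⟩ := hsu
  rcases mem_uIcc_or_mem_uIcc_or_mem_uIcc p q r with hq | hp | hr
  · exact ⟨q, ⟨hs.uIcc_subset hps hrs hq, hqt⟩, hqu⟩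
  · exact ⟨p, ⟨hps, hpt⟩, hu.uIcc_subset hqu hru hp⟩
  · exact ⟨r, ⟨hrs, ht.uIcc_subset hpt hqt hr⟩, hru⟩

theorem Set.image_inter_eq_of_ordConnected_fibers {β : Type*} {f : α → β}
    (hf : ∀ y, (f ⁻¹' {y}).OrdConnected) {s t : Set α} (hs : s.OrdConnected)
    (ht : t.OrdConnected) (hst : (s ∩ t).Nonempty) : f '' (s ∩ t) = f '' s ∩ f '' t := by
  refine (image_inter_subset f s t).antisymm ?_
  rintro _ ⟨⟨x₁, hx₁, rfl⟩, x₂, hx₂, hfx⟩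
  obtain ⟨x, ⟨hxs, hxt⟩, hfx⟩ :=
    hs.inter_inter_nonempty ht (hf (f x₁)) hst ⟨x₂, hx₂, hfx⟩ ⟨x₁, hx₁, rfl⟩
  exact ⟨x, ⟨hxs, hxt⟩, hfx⟩

end HellyOnLine

section Quantization

variable {h : ℝ}

lemma eq_ceil_of_mem_cell (hh : 0 < h) {c : ℤ} {x : ℝ} (hlo : c * h - h / 2 < x)
    (hhi : x ≤ c * h + h / 2) : c = ⌈x / h - 1 / 2⌉ := by
  have hlo' : c - 1 / 2 < x / h := (lt_div_iff₀ hh).2 (by linarith)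
  have hhi' : x / h ≤ c + 1 / 2 := (div_le_iff₀ hh).2 (by linarith)
  exact (Int.ceil_eq_iff.2 ⟨by linarith, by linarith⟩).symm

lemma monotone_of_forall_mem_cell (hh : 0 < h) {q : ℝ → ℝ}
    (hq : ∀ x, ∃ c : ℤ, q x = c * h ∧ c * h - h / 2 < x ∧ x ≤ c * h + h / 2) :
    Monotone q := by
  have hq_eq : q = fun x => (⌈x / h - 1 / 2⌉ : ℝ) * h := by
    funext x
    obtain ⟨c, hqx, hlo, hhi⟩ := hq x
    rw [hqx, eq_ceil_of_mem_cell hh hlo hhi]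
  rw [hq_eq]
  intro x y hxy
  dsimp only
  gcongr

end Quantization

theorem quantization_commutes_with_intersection_general
    (τ μ : ℝ) (hτ : 0 < τ) (hμ : 0 < μ)
    (ℓ : ℝ → ℝ)
    (hℓ : ∀ x : ℝ, ∃ c : ℤ, ℓ x = c * (τ * μ) ∧
        c * (τ * μ) - τ * μ / 2 < x ∧ x ≤ c * (τ * μ) + τ * μ / 2)
    (r : ℝ)
    (a b a' b' : ℤ)
    (Ip Ihat : Set ℝ)
    (hIp : Ip = Set.Icc ((a : ℝ) * (τ * μ) + r) ((b : ℝ) * (τ * μ) + r))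
    (hIhat : Ihat = Set.Icc ((a' : ℝ) * (τ * μ) + r) ((b' : ℝ) * (τ * μ) + r))
    (hne : (Ip ∩ Ihat).Nonempty) :
    ℓ '' (Ip ∩ Ihat) = ℓ '' Ip ∩ ℓ '' Ihat := by
  have hℓ_mono : Monotone ℓ := monotone_of_forall_mem_cell (mul_pos hτ hμ) hℓ
  subst hIp hIhat
  exact image_inter_eq_of_ordConnected_fibers
    (fun _ => ordConnected_singleton.preimage_mono hℓ_mono) ordConnected_Icc ordConnected_Icc hne

/-- Quantization commutes with intersection for grid-aligned intervals with a
common offset `r`, `|r| ≤ τμ/2`, provided the intersection is nonempty. -/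
theorem quantization_commutes_with_intersection
    (τ μ : ℝ) (hτ : 0 < τ) (hμ : 0 < μ)
    (ℓ : ℝ → ℝ)
    (hℓ : ∀ x : ℝ, ∃ c : ℤ, ℓ x = c * (τ * μ) ∧
        c * (τ * μ) - τ * μ / 2 < x ∧ x ≤ c * (τ * μ) + τ * μ / 2)
    (r : ℝ) (hr : |r| ≤ τ * μ / 2)
    (a b a' b' : ℤ)
    (Ip Ihat : Set ℝ)
    (hIp : Ip = Set.Icc ((a : ℝ) * (τ * μ) + r) ((b : ℝ) * (τ * μ) + r))
    (hIhat : Ihat = Set.Icc ((a' : ℝ) * (τ * μ) + r) ((b' : ℝ) * (τ * μ) + r))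
    (hne : (Ip ∩ Ihat).Nonempty) :
    ℓ '' (Ip ∩ Ihat) = ℓ '' Ip ∩ ℓ '' Ihat :=
  quantization_commutes_with_intersection_general τ μ hτ hμ ℓ hℓ r a b a' b' Ip Ihat hIp hIhat hne
end

section
/- For the surge attack defined by x̃(k_s) = x̂_max(k_s) + η + b and x̃(k) = x̃(k-1) + u(k-1) + δ_max + b for k ∈ (k_s, k_e), where at each step the detector statistic updates as C(k) = (C(k-1) + dist(x̃(k), Post_{u(k-1)}(x̃(k-1))) − b)^+: starting from C(k_s − 1) = 0, the statistic satisfies C(k) ≤ η for all k ∈ [k_s, k_e), so the surge attack is never strictly above threshold and bypasses a detector that alarms only when C(k) > η. -/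
lemma infDist_Icc_of_ge (a c y : ℝ) (hac : a ≤ c) (hy : c ≤ y) :
    Metric.infDist y (Set.Icc a c) = y - c := by
  obtain ⟨z, hz, hdz⟩ := (isCompact_Icc (a := a) (b := c)).exists_infDist_eq_dist
    (Set.nonempty_Icc.mpr hac) y
  apply le_antisymm
  · calc Metric.infDist y (Set.Icc a c) ≤ dist y c :=
        Metric.infDist_le_dist_of_mem (Set.right_mem_Icc.mpr hac)
      _ = y - c := by rw [Real.dist_eq, abs_of_nonneg (by linarith)]
  · rw [hdz, Real.dist_eq]
    have := hz.2
    cases abs_cases (y - z) with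
    | inl h => linarith [h.1]
    | inr h => linarith [h.1]

/-- The surge attack keeps the CUSUM statistic at or below the threshold,
hence bypasses a detector that alarms only when `C k > η`. -/
theorem surge_attack_stealthy
    (δmin δmax b η : ℝ) (hδ : δmin ≤ δmax) (hb : 0 ≤ b) (hη : 0 < η)
    (xt u C : ℕ → ℝ)
    (ks ke : ℕ) (hks : 1 ≤ ks) (hkske : ks < ke)
    (hCinit : C (ks - 1) = 0)
    (hstart : xt ks = (xt (ks - 1) + u (ks - 1) + δmax) + η + b)
    (hsurge : ∀ k, ks < k → k < ke → xt k = xt (k - 1) + u (k - 1) + δmax + b)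
    (hCrec : ∀ k, ks ≤ k → k < ke →
      C k = max (C (k - 1) +
        Metric.infDist (xt k)
          (Set.Icc (xt (k - 1) + u (k - 1) + δmin) (xt (k - 1) + u (k - 1) + δmax)) - b) 0) :
    ∀ k, ks ≤ k → k < ke → C k ≤ η := by
  intro k hk1 hk2
  induction k with
  | zero => omega
  | succ n ih =>
    rcases eq_or_lt_of_le hk1 with heq | hlt
    · -- k = ks
      rw [hCrec _ hk1 hk2, ← heq]
      have hd : Metric.infDist (xt ks)
          (Set.Icc (xt (ks - 1) + u (ks - 1) + δmin) (xt (ks - 1) + u (ks - 1) + δmax))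
          = η + b := by
        rw [hstart, infDist_Icc_of_ge _ _ _ (by linarith) (by linarith)]
        ring
      rw [hd, hCinit]
      simp [le_of_lt hη]
    · -- k > ks
      have hn1 : ks ≤ n := by omega
      have hn2 : n < ke := by omega
      have hCn : C n ≤ η := ih hn1 hn2
      rw [hCrec _ hk1 hk2]
      have hxe := hsurge (n + 1) hlt hk2
      simp only [Nat.add_sub_cancel] at hxe
      have hd : Metric.infDist (xt (n + 1))
          (Set.Icc (xt n + u n + δmin) (xt n + u n + δmax)) = b := by
        rw [hxe, infDist_Icc_of_ge _ _ _ (by linarith) (by linarith)]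
        ring
      simp only [Nat.add_sub_cancel, hd]
      have h0 : 0 ≤ η := le_of_lt hη
      rw [max_le_iff]
      constructor <;> linarith
end
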